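/- Suppose V = {1,...,p} partitions into V₁ and V₂ such that |S_{ij}| ≤ λα for all i ∈ V₁, j ∈ V₂. Then the graphical elastic net minimizer Θ* is block diagonal with respect to this partition: Θ*_{ij} = 0 whenever i ∈ V₁ and j ∈ V₂, and the diagonal blocks of Θ* are the minimizers of the corresponding lower-dimensional graphical elastic net problems with input covariance blocks S_{V₁V₁} and S_{V₂V₂}. -/

import Mathlib

/-
Replacing a positive definite `Θ` by its block-diagonal part leaves the diagonal-block
terms of the objective unchanged and deletes the cross terms `S_ji Θ_ij + λ(α|Θ_ij| + (1-α)/2 Θ_ij²)`,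
each of which is nonnegative because `|S_ji| ≤ λα`. It also strictly increases the determinant
when the off-diagonal block `B` is nonzero (strict Fischer inequality): by the Schur complement
`det Θ = det A · det (D - Bᴴ A⁻¹ B)`, and `det C < det (C + M)` for `C ≻ 0` and `M ⪰ 0`, `M ≠ 0`.
So a minimizer has `B = 0`; the objective of a block-diagonal matrix is the sum of the objectives
of its blocks, hence each block minimizes its own problem.
-/

open Matrix BigOperators

/-- The graphical elastic net objective (zero target), over an arbitrary finite index type. -/
noncomputable def gelnetObj {n : Type*} [Fintype n] [DecidableEq n]
    (S : Matrix n n ℝ) (l a : ℝ) (Θ : Matrix n n ℝ) : ℝ :=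
  -Real.log Θ.det + (S * Θ).trace +
    l * (a * ∑ i, ∑ j, |Θ i j| + (1 - a) / 2 * ∑ i, ∑ j, (Θ i j) ^ 2)

theorem Matrix.IsHermitian.toBlocks₂₁ {m n α : Type*} [Star α]
    {Θ : Matrix (m ⊕ n) (m ⊕ n) α} (hΘ : Θ.IsHermitian) : Θ.toBlocks₂₁ = Θ.toBlocks₁₂ᴴ :=
  (congr_arg Matrix.toBlocks₂₁ hΘ.eq).symm

section

variable {m n : Type*} [Fintype m] [Fintype n]

theorem Matrix.PosDef.conjTranspose_mul_mul_same_eq_zero_iff {A : Matrix m m ℝ} (hA : A.PosDef)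
    {B : Matrix m n ℝ} : Bᴴ * A * B = 0 ↔ B = 0 := by
  classical
  refine ⟨fun h => ?_, fun h => by simp [h]⟩
  ext i j
  by_contra hij
  have hBx : B *ᵥ Pi.single j 1 ≠ 0 := fun h0 => hij (by simpa using congrFun h0 i)
  have hquad : star (Pi.single j 1 : n → ℝ) ⬝ᵥ (Bᴴ * A * B) *ᵥ Pi.single j 1 =
      star (B *ᵥ Pi.single j 1) ⬝ᵥ A *ᵥ (B *ᵥ Pi.single j 1) := by
    rw [← mulVec_mulVec, ← mulVec_mulVec, dotProduct_mulVec, ← star_mulVec]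
  rw [h, zero_mulVec, dotProduct_zero] at hquad
  exact (hA.dotProduct_mulVec_pos hBx).ne hquad

variable [DecidableEq m] [DecidableEq n]

theorem Matrix.PosSemidef.one_lt_det_one_add {N : Matrix n n ℝ} (hN : N.PosSemidef)
    (hN0 : N ≠ 0) : 1 < (1 + N).det := by
  have hdet : (1 + N).det = ∏ i, (1 + hN.1.eigenvalues i) := by
    have h : 1 + N = cfc (fun x : ℝ => 1 + x) N := by
      rw [cfc_const_add (1 : ℝ) (fun x => x) N (by fun_prop) hN.1.isSelfAdjoint,
        cfc_id' ℝ N hN.1.isSelfAdjoint, map_one]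
    rw [h, hN.1.cfc_eq, IsHermitian.cfc, Unitary.conjStarAlgAut_apply, det_mul_right_comm]
    simp
  obtain ⟨i, hi⟩ : ∃ i, hN.1.eigenvalues i ≠ 0 := by
    by_contra! h
    exact hN0 (hN.1.eigenvalues_eq_zero_iff.mp (funext h))
  have hle j : 1 ≤ 1 + hN.1.eigenvalues j := by linarith [hN.eigenvalues_nonneg j]
  have hlt : 1 < 1 + hN.1.eigenvalues i := by linarith [(hN.eigenvalues_nonneg i).lt_of_ne' hi]
  simpa [hdet] using Finset.prod_lt_prod (s := .univ) (f := fun _ => (1 : ℝ))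
    (fun _ _ => one_pos) (fun j _ => hle j) ⟨i, Finset.mem_univ i, hlt⟩

open scoped MatrixOrder in
theorem Matrix.PosDef.det_lt_det_add {X M : Matrix n n ℝ} (hX : X.PosDef) (hM : M.PosSemidef)
    (hM0 : M ≠ 0) : X.det < (X + M).det := by
  set Q := CFC.sqrt X
  have hQX : Q * Q = X := CFC.sqrt_mul_sqrt_self X hX.posSemidef.nonneg
  have hQ : IsUnit Q.det :=
    (isUnit_iff_isUnit_det Q).mp ((CFC.isUnit_sqrt_iff X hX.posSemidef.nonneg).mpr hX.isUnit)
  set N := Q⁻¹ * M * Q⁻¹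
  have hN : N.PosSemidef := by
    have := hM.conjTranspose_mul_mul_same Q⁻¹
    rwa [(CFC.sqrt_nonneg X).posSemidef.1.inv] at this
  have hMN : M = Q * N * Q := by
    simp only [N, ← mul_assoc, mul_nonsing_inv _ hQ, one_mul]
    simp [mul_assoc, nonsing_inv_mul _ hQ]
  have hN0 : N ≠ 0 := by rintro hN0; exact hM0 (by simp [hMN, hN0])
  have hXM : X + M = Q * (1 + N) * Q := by rw [hMN, ← hQX]; noncomm_ring
  rw [hXM, det_mul, det_mul, ← hQX, det_mul]
  nlinarith [hX.det_pos, hQX ▸ det_mul Q Q, hN.one_lt_det_one_add hN0]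

theorem Matrix.PosDef.det_lt_det_toBlocks₁₁_mul_det_toBlocks₂₂ {Θ : Matrix (m ⊕ n) (m ⊕ n) ℝ}
    (hΘ : Θ.PosDef) (hB : Θ.toBlocks₁₂ ≠ 0) :
    Θ.det < Θ.toBlocks₁₁.det * Θ.toBlocks₂₂.det := by
  set A := Θ.toBlocks₁₁
  set B := Θ.toBlocks₁₂
  set D := Θ.toBlocks₂₂
  have hA : A.PosDef := hΘ.submatrix Sum.inl_injective
  have hΘ_eq : Θ = fromBlocks A B Bᴴ D := by rw [← hΘ.1.toBlocks₂₁, fromBlocks_toBlocks]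
  let := hA.isUnit.invertible
  have hdet : Θ.det = A.det * (D - Bᴴ * A⁻¹ * B).det := by
    rw [hΘ_eq, det_fromBlocks₁₁, invOf_eq_nonsing_inv]
  have hSchur : (D - Bᴴ * A⁻¹ * B).PosDef := by
    have hpsd := (PosDef.fromBlocks₁₁ B D hA).mp (hΘ_eq ▸ hΘ.posSemidef)
    refine hpsd.posDef_iff_det_ne_zero.mpr fun h0 => hΘ.det_pos.ne' ?_
    rw [hdet, h0, mul_zero]
  have hM0 : Bᴴ * A⁻¹ * B ≠ 0 := mt hA.inv.conjTranspose_mul_mul_same_eq_zero_iff.mp hB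
  have hD := hSchur.det_lt_det_add (hA.inv.posSemidef.conjTranspose_mul_mul_same B) hM0
  rw [sub_add_cancel] at hD
  rw [hdet]
  exact mul_lt_mul_of_pos_left hD hA.det_pos

theorem Matrix.PosDef.fromBlocks_zero_zero {A : Matrix m m ℝ} {D : Matrix n n ℝ}
    (hA : A.PosDef) (hD : D.PosDef) : (fromBlocks A 0 0 D).PosDef := by
  let := hA.isUnit.invertible
  have hpsd : (fromBlocks A 0 0 D).PosSemidef := by
    simpa using (PosDef.fromBlocks₁₁ (0 : Matrix m n ℝ) D hA).mpr (by simpa using hD.posSemidef)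
  rw [hpsd.posDef_iff_det_ne_zero, det_fromBlocks_zero₂₁]
  exact mul_ne_zero hA.det_pos.ne' hD.det_pos.ne'

end

/-- The contribution of an entry `t = Θ i j`, paired with `s = S j i`, to `tr (S Θ)` plus the
penalty. -/
noncomputable def gelnetEntry (l a s t : ℝ) : ℝ := s * t + l * (a * |t| + (1 - a) / 2 * t ^ 2)

@[simp]
theorem gelnetEntry_zero (l a s : ℝ) : gelnetEntry l a s 0 = 0 := by simp [gelnetEntry]

theorem gelnetEntry_nonneg {l a s : ℝ} (hl : 0 ≤ l) (ha : a ≤ 1) (hs : |s| ≤ l * a) (t : ℝ) :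
    0 ≤ gelnetEntry l a s t := by
  have hst : -(s * t) ≤ l * a * |t| :=
    calc -(s * t) ≤ |s * t| := neg_le_abs _
      _ = |s| * |t| := abs_mul s t
      _ ≤ l * a * |t| := mul_le_mul_of_nonneg_right hs (abs_nonneg t)
  have hquad : 0 ≤ l * ((1 - a) / 2 * t ^ 2) := by
    have : 0 ≤ 1 - a := by linarith
    positivity
  unfold gelnetEntry
  nlinarith

section

variable {m n : Type*} [Fintype m] [Fintype n] [DecidableEq m] [DecidableEq n]

theorem gelnetObj_eq_sum (S Θ : Matrix n n ℝ) (l a : ℝ) :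
    gelnetObj S l a Θ = -Real.log Θ.det + ∑ i, ∑ j, gelnetEntry l a (S j i) (Θ i j) := by
  rw [gelnetObj, trace_mul_comm]
  simp only [gelnetEntry, trace, diag, mul_apply, Finset.sum_add_distrib, ← Finset.mul_sum,
    mul_comm (Θ _ _)]
  ring

theorem gelnetObj_submatrix_equiv (S Θ : Matrix n n ℝ) (l a : ℝ) (e : m ≃ n) :
    gelnetObj (S.submatrix e e) l a (Θ.submatrix e e) = gelnetObj S l a Θ := by
  simp only [gelnetObj_eq_sum, det_submatrix_equiv_self, submatrix_apply]
  congr 1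
  exact Fintype.sum_equiv e _ _ fun i => Fintype.sum_equiv e _ _ fun j => rfl

theorem isMinOn_gelnetObj_submatrix_equiv {S Θ : Matrix n n ℝ} {l a : ℝ} (e : m ≃ n)
    (hΘ : IsMinOn (gelnetObj S l a) {Θ | Θ.PosDef} Θ) :
    IsMinOn (gelnetObj (S.submatrix e e) l a) {Θ | Θ.PosDef} (Θ.submatrix e e) := by
  intro Ψ hΨ
  have := hΘ (a := Ψ.submatrix e.symm e.symm) (hΨ.submatrix e.symm.injective)
  simpa [← gelnetObj_submatrix_equiv S _ l a e] using this

theorem gelnetObj_fromBlocks_zero_zero (S : Matrix (m ⊕ n) (m ⊕ n) ℝ) (l a : ℝ)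
    {X : Matrix m m ℝ} {Y : Matrix n n ℝ} (hX : 0 < X.det) (hY : 0 < Y.det) :
    gelnetObj S l a (fromBlocks X 0 0 Y) =
      gelnetObj S.toBlocks₁₁ l a X + gelnetObj S.toBlocks₂₂ l a Y := by
  simp only [gelnetObj_eq_sum, det_fromBlocks_zero₂₁, Real.log_mul hX.ne' hY.ne',
    Fintype.sum_sum_type, fromBlocks_apply₁₁, fromBlocks_apply₁₂, fromBlocks_apply₂₁,
    fromBlocks_apply₂₂, Matrix.zero_apply, gelnetEntry_zero, Finset.sum_const_zero, add_zero,
    zero_add, toBlocks₁₁, toBlocks₂₂, of_apply]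
  ring

theorem gelnetObj_fromBlocks_toBlocks_lt {S Θ : Matrix (m ⊕ n) (m ⊕ n) ℝ} {l a : ℝ}
    (hl : 0 ≤ l) (ha : a ≤ 1) (hS₁₂ : ∀ i j, |S (Sum.inl i) (Sum.inr j)| ≤ l * a)
    (hS₂₁ : ∀ i j, |S (Sum.inr j) (Sum.inl i)| ≤ l * a) (hΘ : Θ.PosDef)
    (hB : Θ.toBlocks₁₂ ≠ 0) :
    gelnetObj S l a (fromBlocks Θ.toBlocks₁₁ 0 0 Θ.toBlocks₂₂) < gelnetObj S l a Θ := by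
  have hlog : Real.log Θ.det < Real.log (Θ.toBlocks₁₁.det * Θ.toBlocks₂₂.det) :=
    Real.log_lt_log hΘ.det_pos (hΘ.det_lt_det_toBlocks₁₁_mul_det_toBlocks₂₂ hB)
  have hcross₁₂ :
      0 ≤ ∑ i, ∑ j, gelnetEntry l a (S (Sum.inr j) (Sum.inl i)) (Θ (Sum.inl i) (Sum.inr j)) :=
    Finset.sum_nonneg fun i _ => Finset.sum_nonneg fun j _ =>
      gelnetEntry_nonneg hl ha (hS₂₁ i j) _
  have hcross₂₁ :
      0 ≤ ∑ j, ∑ i, gelnetEntry l a (S (Sum.inl i) (Sum.inr j)) (Θ (Sum.inr j) (Sum.inl i)) :=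
    Finset.sum_nonneg fun j _ => Finset.sum_nonneg fun i _ =>
      gelnetEntry_nonneg hl ha (hS₁₂ i j) _
  simp only [gelnetObj_eq_sum, det_fromBlocks_zero₂₁, Fintype.sum_sum_type, fromBlocks_apply₁₁,
    fromBlocks_apply₁₂, fromBlocks_apply₂₁, fromBlocks_apply₂₂, Matrix.zero_apply,
    gelnetEntry_zero, Finset.sum_const_zero, add_zero, zero_add, toBlocks₁₁, toBlocks₂₂,
    of_apply, Finset.sum_add_distrib] at hlog ⊢
  linarith

theorem gelnet_blockDiagonal_of_isMinOn {S Θ : Matrix (m ⊕ n) (m ⊕ n) ℝ} {l a : ℝ}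
    (hl : 0 ≤ l) (ha : a ≤ 1) (hS₁₂ : ∀ i j, |S (Sum.inl i) (Sum.inr j)| ≤ l * a)
    (hS₂₁ : ∀ i j, |S (Sum.inr j) (Sum.inl i)| ≤ l * a) (hΘ : Θ.PosDef)
    (hmin : IsMinOn (gelnetObj S l a) {Θ | Θ.PosDef} Θ) :
    Θ.toBlocks₁₂ = 0 ∧
      IsMinOn (gelnetObj S.toBlocks₁₁ l a) {Θ | Θ.PosDef} Θ.toBlocks₁₁ ∧
      IsMinOn (gelnetObj S.toBlocks₂₂ l a) {Θ | Θ.PosDef} Θ.toBlocks₂₂ := by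
  have hA : Θ.toBlocks₁₁.PosDef := hΘ.submatrix Sum.inl_injective
  have hD : Θ.toBlocks₂₂.PosDef := hΘ.submatrix Sum.inr_injective
  have hB : Θ.toBlocks₁₂ = 0 := by
    by_contra hB
    exact (hmin (hA.fromBlocks_zero_zero hD)).not_gt
      (gelnetObj_fromBlocks_toBlocks_lt hl ha hS₁₂ hS₂₁ hΘ hB)
  have hΘ_eq : Θ = fromBlocks Θ.toBlocks₁₁ 0 0 Θ.toBlocks₂₂ := by
    rw [← hB, ← conjTranspose_zero, ← hB, ← hΘ.1.toBlocks₂₁, fromBlocks_toBlocks]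
  have hval : gelnetObj S l a Θ =
      gelnetObj S.toBlocks₁₁ l a Θ.toBlocks₁₁ + gelnetObj S.toBlocks₂₂ l a Θ.toBlocks₂₂ := by
    conv_lhs => rw [hΘ_eq]
    exact gelnetObj_fromBlocks_zero_zero S l a hA.det_pos hD.det_pos
  refine ⟨hB, isMinOn_iff.mpr fun A' hA' => ?_, isMinOn_iff.mpr fun D' hD' => ?_⟩
  · have := isMinOn_iff.mp hmin _ (PosDef.fromBlocks_zero_zero hA' hD)
    rw [hval, gelnetObj_fromBlocks_zero_zero S l a hA'.det_pos hD.det_pos] at this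
    exact le_of_add_le_add_right this
  · have := isMinOn_iff.mp hmin _ (hA.fromBlocks_zero_zero hD')
    rw [hval, gelnetObj_fromBlocks_zero_zero S l a hA.det_pos hD'.det_pos] at this
    exact le_of_add_le_add_left this

end

/-- If the vertex set splits as `V₁ ∪ V₁ᶜ` with `|S i j| ≤ λα` across the split, then
the graphical elastic net minimizer is block diagonal with respect to this partition,
and each diagonal block minimizes the corresponding lower-dimensional problem. -/
theorem gelnet_block_diagonal {p : ℕ}
    (S Θstar : Matrix (Fin p) (Fin p) ℝ) (l a : ℝ) (V₁ : Finset (Fin p))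
    (hl : 0 < l) (ha : a ∈ Set.Ioc (0 : ℝ) 1)
    (hS : S.PosSemidef)
    (hΘ : Θstar.PosDef)
    (hmin : ∀ Θ : Matrix (Fin p) (Fin p) ℝ, Θ.PosDef →
      gelnetObj S l a Θstar ≤ gelnetObj S l a Θ)
    (hsplit : ∀ i ∈ V₁, ∀ j ∉ V₁, |S i j| ≤ l * a) :
    (∀ i ∈ V₁, ∀ j ∉ V₁, Θstar i j = 0) ∧
    (Θstar.submatrix (Subtype.val : {i : Fin p // i ∈ V₁} → Fin p) Subtype.val).PosDef ∧
    (∀ Θ' : Matrix {i : Fin p // i ∈ V₁} {i : Fin p // i ∈ V₁} ℝ, Θ'.PosDef →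
      gelnetObj (S.submatrix (Subtype.val : {i : Fin p // i ∈ V₁} → Fin p) Subtype.val) l a
          (Θstar.submatrix (Subtype.val : {i : Fin p // i ∈ V₁} → Fin p) Subtype.val) ≤
        gelnetObj (S.submatrix (Subtype.val : {i : Fin p // i ∈ V₁} → Fin p) Subtype.val) l a Θ') ∧
    (Θstar.submatrix (Subtype.val : {i : Fin p // i ∉ V₁} → Fin p) Subtype.val).PosDef ∧
    (∀ Θ' : Matrix {i : Fin p // i ∉ V₁} {i : Fin p // i ∉ V₁} ℝ, Θ'.PosDef →
      gelnetObj (S.submatrix (Subtype.val : {i : Fin p // i ∉ V₁} → Fin p) Subtype.val) l a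
          (Θstar.submatrix (Subtype.val : {i : Fin p // i ∉ V₁} → Fin p) Subtype.val) ≤
        gelnetObj (S.submatrix (Subtype.val : {i : Fin p // i ∉ V₁} → Fin p) Subtype.val) l a Θ') := by
  let e := Equiv.sumCompl (· ∈ V₁)
  have hS₂₁ (i : {i // i ∈ V₁}) (j : {j // j ∉ V₁}) : |S j i| ≤ l * a := by
    rw [← hS.1.apply j i, star_trivial]
    exact hsplit i i.2 j j.2
  obtain ⟨hB, hmin₁, hmin₂⟩ := gelnet_blockDiagonal_of_isMinOn (S := S.submatrix e e) hl.le ha.2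
    (fun i j => hsplit i i.2 j j.2) hS₂₁ (hΘ.submatrix e.injective)
    (isMinOn_gelnetObj_submatrix_equiv e (isMinOn_iff.mpr hmin))
  exact ⟨fun i hi j hj => congrFun (congrFun hB ⟨i, hi⟩) ⟨j, hj⟩,
    hΘ.submatrix Subtype.val_injective, isMinOn_iff.mp hmin₁,
    hΘ.submatrix Subtype.val_injective, isMinOn_iff.mp hmin₂⟩
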